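/- Let p = [b_1^{a_1} ⋯ b_r^{a_r}] (b_1 ≥ ⋯ ≥ b_r) be an orthogonal partition of 2n+1, and set P := [p_1 p_1 (2n*)] where 2n* = (Σ_{i : b_i odd} a_i) − 1. Then in the dominance order on partitions of 2n one has P^{Sp_{2n}} ≤ ((p^-)_{Sp_{2n}})^t, i.e. the Sp_{2n}-expansion of P is dominated by the Barbasch–Vogan dual of p. -/

import Mathlib

/-!
Let `q = p^-` and let `c` be its `Sp`-collapse. Since `P^{Sp}` is the least special symplectic
partition above `P`, it suffices to show that `cᵗ` is symplectic (it is then special, as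
`cᵗᵗ = c` is symplectic) and that `P ≤ cᵗ`.

`cᵗ` is symplectic as soon as the sum of the `M` largest parts of `c` is even for every even `M`.
If such a sum were odd, the `M`-th and `(M+1)`-st parts of `c` would be equal to one odd value
`v`. Inside that run of `v`'s the partial sums of `c` stay strictly below those of `q`: where
they touch, `q` has a run of `v`'s as well, and orthogonality of `p` gives the partial sums of
`q` there the parity opposite to those of `c`. Replacing two parts `v` of `c` by `v + 1` and
`v - 1` therefore yields a symplectic partition still below `q` but above `c` at `M`,
contradicting the maximality of `c`.

For `P ≤ cᵗ`: with `O` the (odd) number of odd parts of `p`, the sum of the first `k` columns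
of `P` is `min (O - 1) k + 2 ∑ⱼ min k s_{2j}(p)`. Truncated at `k`, the odd-indexed columns of
`p` exceed the even-indexed ones by at most `k` (they interlace) and by at most `O` (their
difference counts odd parts), so the sum of the `k` largest parts of `p`, and a fortiori of
`q`, is at most `2 ∑ⱼ min k s_{2j}(p) + min O k`. Hence the column sums of `P` dominate the
largest even number below each partial sum of `q`. At the corners `k = s_{m+1}(c)` the partial
sums of the symplectic `c` are even, hence bounded by the column sums of `P`, and bounds at
these corners alone give `P ≤ cᵗ`.
-/

namespace JiangWF

/-- `sCount p i` : the number of parts of `p` that are `≥ i`. -/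
def sCount (p : Multiset ℕ) (i : ℕ) : ℕ := (p.filter (fun a => i ≤ a)).card

/-- `rCount p i` : the number of parts of `p` equal to `i`. -/
def rCount (p : Multiset ℕ) (i : ℕ) : ℕ := p.count i

/-- The largest part of `p` (`0` for the empty partition). -/
def maxPart (p : Multiset ℕ) : ℕ := p.sup

/-- The smallest part of `p` (`0` for the empty partition). -/
noncomputable def minPart (p : Multiset ℕ) : ℕ := sInf {a : ℕ | a ∈ p}

/-- The transpose partition: its `i`-th part is `sCount p i`, for `1 ≤ i ≤ maxPart p`. -/
def transpose (p : Multiset ℕ) : Multiset ℕ :=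
  (Multiset.range (maxPart p)).map fun i => sCount p (i + 1)

/-- The sum of the `m` largest parts of `p`. -/
def topSum (p : Multiset ℕ) (m : ℕ) : ℕ :=
  ∑ i ∈ Finset.Icc 1 p.sum, min m (sCount p i)

/-- Dominance order: `domLE p q` means `p ≤ q`. -/
def domLE (p q : Multiset ℕ) : Prop := ∀ m, topSum p m ≤ topSum q m

/-- `p` is a partition of `N`: all parts positive, summing to `N`. -/
def IsPartitionOf (p : Multiset ℕ) (N : ℕ) : Prop := (∀ a ∈ p, 0 < a) ∧ p.sum = N

/-- Symplectic partition: every odd part occurs with even multiplicity. -/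
def IsSymplectic (p : Multiset ℕ) : Prop := ∀ a, a % 2 = 1 → Even (p.count a)

/-- Orthogonal partition: every even part occurs with even multiplicity. -/
def IsOrthogonal (p : Multiset ℕ) : Prop := ∀ a, a % 2 = 0 → Even (p.count a)

/-- `p^-`: decrease the smallest part by one (deleting it if it becomes `0`). -/
noncomputable def pMinus (p : Multiset ℕ) : Multiset ℕ :=
  if minPart p ≤ 1 then p.erase (minPart p)
  else (minPart p - 1) ::ₘ p.erase (minPart p)

/-- `p^+`: increase the largest part by one. -/
def pPlus (p : Multiset ℕ) : Multiset ℕ := (maxPart p + 1) ::ₘ p.erase (maxPart p)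

/-- `p^{+-}`: increase the largest part by one and decrease the smallest by one. -/
noncomputable def pPM (p : Multiset ℕ) : Multiset ℕ := pMinus (pPlus p)

/-- `p₁ = [⌊b_1/2⌋^{a_1} ⋯ ⌊b_r/2⌋^{a_r}]^t` (discarding zero entries before transposing). -/
def pOne (p : Multiset ℕ) : Multiset ℕ :=
  transpose ((p.map fun b => b / 2).filter fun x => 0 < x)

/-- `Σ_{i : b_i odd} a_i`: the number of odd parts of `p`. -/
def oddMult (p : Multiset ℕ) : ℕ := (p.filter fun a => a % 2 = 1).card

/-- `n* = ⌊(Σ_{i : b_i odd} a_i)/2⌋`. -/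
def nStar (p : Multiset ℕ) : ℕ := oddMult p / 2

/-- Append an extra part `m` to `q`, omitted if `m = 0`. -/
def addPart (m : ℕ) (q : Multiset ℕ) : Multiset ℕ := if m = 0 then q else m ::ₘ q

/-- `c` is the `Sp`-collapse of `p`: the maximal symplectic partition `≤ p` in dominance. -/
def IsSpCollapse (p c : Multiset ℕ) : Prop :=
  IsPartitionOf c p.sum ∧ IsSymplectic c ∧ domLE c p ∧
    ∀ c', IsPartitionOf c' p.sum → IsSymplectic c' → domLE c' p → domLE c' c

/-- `c` is the `SO`-collapse of `p`: the maximal orthogonal partition `≤ p` in dominance. -/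
def IsSOCollapse (p c : Multiset ℕ) : Prop :=
  IsPartitionOf c p.sum ∧ IsOrthogonal c ∧ domLE c p ∧
    ∀ c', IsPartitionOf c' p.sum → IsOrthogonal c' → domLE c' p → domLE c' c

/-- `e` is the `Sp`-expansion of `p`: the minimal special symplectic partition `≥ p`. -/
def IsSpExpansion (p e : Multiset ℕ) : Prop :=
  IsPartitionOf e p.sum ∧ IsSymplectic e ∧ IsSymplectic (transpose e) ∧ domLE p e ∧
    ∀ e', IsPartitionOf e' p.sum → IsSymplectic e' → IsSymplectic (transpose e') →
      domLE p e' → domLE e e'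

/-- `e` is the `SO_{2n+1}`-expansion of `p`: the minimal special orthogonal partition `≥ p`
(odd case: special means the transpose is orthogonal). -/
def IsSOOddExpansion (p e : Multiset ℕ) : Prop :=
  IsPartitionOf e p.sum ∧ IsOrthogonal e ∧ IsOrthogonal (transpose e) ∧ domLE p e ∧
    ∀ e', IsPartitionOf e' p.sum → IsOrthogonal e' → IsOrthogonal (transpose e') →
      domLE p e' → domLE e e'

/-- `e` is the `SO_{2n}`-expansion of `p`: the minimal special orthogonal partition `≥ p`
(even case: special means the transpose is symplectic). -/
def IsSOEvenExpansion (p e : Multiset ℕ) : Prop :=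
  IsPartitionOf e p.sum ∧ IsOrthogonal e ∧ IsSymplectic (transpose e) ∧ domLE p e ∧
    ∀ e', IsPartitionOf e' p.sum → IsOrthogonal e' → IsSymplectic (transpose e') →
      domLE p e' → domLE e e'

/-- `dim_C(q)` for a symplectic partition `q` of `2k`:
`2k² + k − (1/2)Σ s_i(q)² − (1/2)Σ_{i odd} r_i(q)` (note `2k² + k = (|q|² + |q|)/2`). -/
def dimC (p : Multiset ℕ) : ℚ :=
  ((p.sum : ℚ) ^ 2 + (p.sum : ℚ)) / 2
    - (∑ i ∈ Finset.Icc 1 p.sum, (sCount p i : ℚ) ^ 2) / 2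
    - (∑ i ∈ Finset.Icc 1 p.sum, if i % 2 = 1 then (rCount p i : ℚ) else 0) / 2

/-- `dim_B(q)` for an orthogonal partition `q` of `2k+1`:
`2k² + k − (1/2)Σ s_i(q)² + (1/2)Σ_{i odd} r_i(q)` (note `2k² + k = (|q|² − |q|)/2`). -/
def dimB (p : Multiset ℕ) : ℚ :=
  ((p.sum : ℚ) ^ 2 - (p.sum : ℚ)) / 2
    - (∑ i ∈ Finset.Icc 1 p.sum, (sCount p i : ℚ) ^ 2) / 2
    + (∑ i ∈ Finset.Icc 1 p.sum, if i % 2 = 1 then (rCount p i : ℚ) else 0) / 2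

/-- `dim_D(q)` for an orthogonal partition `q` of `2k`:
`2k² − k − (1/2)Σ s_i(q)² + (1/2)Σ_{i odd} r_i(q)` (note `2k² − k = (|q|² − |q|)/2`). -/
def dimD (p : Multiset ℕ) : ℚ :=
  ((p.sum : ℚ) ^ 2 - (p.sum : ℚ)) / 2
    - (∑ i ∈ Finset.Icc 1 p.sum, (sCount p i : ℚ) ^ 2) / 2
    + (∑ i ∈ Finset.Icc 1 p.sum, if i % 2 = 1 then (rCount p i : ℚ) else 0) / 2

open Finset

section Columns

lemma sCount_cons (a : ℕ) (X : Multiset ℕ) (i : ℕ) :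
    sCount (a ::ₘ X) i = (if i ≤ a then 1 else 0) + sCount X i := by
  simp only [sCount, Multiset.filter_cons]
  split <;> simp [Nat.add_comm]

lemma sCount_addPart (w : ℕ) (X : Multiset ℕ) {i : ℕ} (hi : 1 ≤ i) :
    sCount (addPart w X) i = (if i ≤ w then 1 else 0) + sCount X i := by
  unfold addPart
  split_ifs <;> first | omega | simp_all [sCount_cons]

lemma sCount_antitone (X : Multiset ℕ) : Antitone (sCount X) := fun _ _ h =>
  Multiset.card_le_card (Multiset.monotone_filter_right _ fun _ hi => le_trans h hi)

lemma sCount_le_card (X : Multiset ℕ) (i : ℕ) : sCount X i ≤ Multiset.card X :=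
  Multiset.card_le_card (Multiset.filter_le _ _)

lemma sCount_pos_iff {X : Multiset ℕ} {i : ℕ} : 0 < sCount X i ↔ ∃ a ∈ X, i ≤ a := by
  simp [sCount, Multiset.card_pos_iff_exists_mem]

lemma count_add_sCount_succ (X : Multiset ℕ) (a : ℕ) :
    X.count a + sCount X (a + 1) = sCount X a := by
  induction X using Multiset.induction_on with
  | empty => simp [sCount]
  | cons b X ih =>
    rw [sCount_cons, sCount_cons, Multiset.count_cons]
    split_ifs <;> omega

lemma maxPart_le_sum (X : Multiset ℕ) : maxPart X ≤ X.sum :=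
  Multiset.sup_le.2 fun _ ha => Multiset.le_sum_of_mem ha

lemma exists_lt_mem_of_lt_maxPart {X : Multiset ℕ} {j : ℕ} (h : j < maxPart X) :
    ∃ a ∈ X, j < a := by
  by_contra! H
  exact (Multiset.sup_le.2 H).not_gt h

lemma sCount_eq_zero_of_maxPart_lt {X : Multiset ℕ} {i : ℕ} (h : maxPart X < i) :
    sCount X i = 0 :=
  Multiset.card_eq_zero.2 <| Multiset.filter_eq_nil.2 fun _ ha hia =>
    absurd (Multiset.le_sup ha) (by unfold maxPart at h; omega)

lemma sum_sCount_comp {ι : Type*} (s : Finset ι) (g : ι → ℕ) (X : Multiset ℕ) :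
    ∑ j ∈ s, sCount X (g j) = (X.map fun a => #(s.filter fun j => g j ≤ a)).sum := by
  induction X using Multiset.induction_on with
  | empty => simp [sCount]
  | cons b X ih =>
    simp only [sCount_cons, sum_add_distrib, ih, Multiset.map_cons, Multiset.sum_cons,
      card_filter]

lemma sum_Icc_sCount (X : Multiset ℕ) (k : ℕ) :
    ∑ i ∈ Icc 1 k, sCount X i = (X.map fun a => min a k).sum := by
  rw [show ∑ i ∈ Icc 1 k, sCount X i = ∑ i ∈ Icc 1 k, sCount X (id i) from rfl,
    sum_sCount_comp]
  congr 1
  refine Multiset.map_congr rfl fun a _ => ?_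
  rw [show (Icc 1 k).filter (fun j => id j ≤ a) = Icc 1 (min a k) by
    ext; simp only [id_eq, mem_filter, mem_Icc]; omega]
  simp

lemma sum_range_sCount_add {X : Multiset ℕ} {v N : ℕ} (hX : maxPart X ≤ v + N) :
    ∑ i ∈ range N, sCount X (v + i + 1) = (X.map (· - v)).sum := by
  rw [sum_sCount_comp]
  congr 1
  refine Multiset.map_congr rfl fun a ha => ?_
  have : a ≤ maxPart X := Multiset.le_sup ha
  rw [show (range N).filter (fun i => v + i + 1 ≤ a) = range (a - v) by
    ext; simp only [mem_filter, mem_range]; omega]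
  simp

lemma sum_range_sCount_two_mul_add_one {X : Multiset ℕ} {N : ℕ} (hX : maxPart X ≤ 2 * N) :
    ∑ j ∈ range N, sCount X (2 * j + 1) = (X.map fun a => (a + 1) / 2).sum := by
  rw [sum_sCount_comp]
  congr 1
  refine Multiset.map_congr rfl fun a ha => ?_
  have : a ≤ maxPart X := Multiset.le_sup ha
  rw [show (range N).filter (fun j => 2 * j + 1 ≤ a) = range ((a + 1) / 2) by
    ext; simp only [mem_filter, mem_range]; omega]
  simp

lemma sum_range_sCount_two_mul_add_two {X : Multiset ℕ} {N : ℕ} (hX : maxPart X ≤ 2 * N) :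
    ∑ j ∈ range N, sCount X (2 * j + 2) = (X.map (· / 2)).sum := by
  rw [sum_sCount_comp]
  congr 1
  refine Multiset.map_congr rfl fun a ha => ?_
  have : a ≤ maxPart X := Multiset.le_sup ha
  rw [show (range N).filter (fun j => 2 * j + 2 ≤ a) = range (a / 2) by
    ext; simp only [mem_filter, mem_range]; omega]
  simp

end Columns

section TopSum

lemma topSum_eq_sum_range {X : Multiset ℕ} {N : ℕ} (hN : maxPart X ≤ N) (m : ℕ) :
    topSum X m = ∑ i ∈ range N, min m (sCount X (i + 1)) := by
  have reduce : ∀ N', maxPart X ≤ N' → ∑ i ∈ range N', min m (sCount X (i + 1)) =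
      ∑ i ∈ range (maxPart X), min m (sCount X (i + 1)) := by
    intro N' hN'
    obtain ⟨d, rfl⟩ := Nat.exists_eq_add_of_le hN'
    rw [sum_range_add, add_eq_left]
    exact sum_eq_zero fun i _ => by rw [sCount_eq_zero_of_maxPart_lt (by omega), _root_.min_zero]
  rw [reduce N hN, ← reduce _ (maxPart_le_sum X), topSum, ← Finset.Ico_add_one_right_eq_Icc,
    sum_Ico_eq_sum_range]
  exact sum_congr rfl fun i _ => by rw [Nat.add_comm 1 i]

lemma topSum_eq_sum_range_add (X : Multiset ℕ) (m v : ℕ) :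
    topSum X m = ∑ i ∈ range v, min m (sCount X (i + 1)) +
      ∑ i ∈ range (maxPart X), min m (sCount X (v + i + 1)) := by
  rw [topSum_eq_sum_range (N := v + maxPart X) (by omega), sum_range_add]

lemma topSum_le_mul_add_sum_tsub (X : Multiset ℕ) (m v : ℕ) :
    topSum X m ≤ m * v + (X.map (· - v)).sum := by
  rw [topSum_eq_sum_range_add X m v, ← sum_range_sCount_add (le_add_self)]
  gcongr
  · exact (sum_le_sum fun _ _ => min_le_left _ _).trans_eq (by simp [mul_comm])
  · exact min_le_right _ _

lemma topSum_eq_mul_add_sum_tsub {X : Multiset ℕ} {m v : ℕ} (h₁ : sCount X (v + 1) ≤ m)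
    (h₂ : m ≤ sCount X v) :
    topSum X m = m * v + (X.map (· - v)).sum := by
  rw [topSum_eq_sum_range_add X m v, ← sum_range_sCount_add (le_add_self)]
  congr 1
  · rw [sum_congr rfl fun i hi => min_eq_left (h₂.trans (sCount_antitone X
      (show i + 1 ≤ v by rw [mem_range] at hi; omega)))]
    simp [mul_comm]
  · exact sum_congr rfl fun i _ => min_eq_right ((sCount_antitone X (by omega)).trans h₁)

lemma topSum_of_sCount_one_le {X : Multiset ℕ} {m : ℕ} (h : sCount X 1 ≤ m) :
    topSum X m = X.sum := by
  rw [topSum, sum_congr rfl fun i hi => min_eq_right ((sCount_antitone X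
    (mem_Icc.1 hi).1).trans h), sum_Icc_sCount]
  conv_rhs => rw [← Multiset.map_id X]
  exact congrArg _ (Multiset.map_congr rfl fun a ha => min_eq_left (Multiset.le_sum_of_mem ha))

lemma sum_filter_lt (X : Multiset ℕ) (v : ℕ) :
    (X.filter (v < ·)).sum = v * sCount X (v + 1) + (X.map (· - v)).sum := by
  induction X using Multiset.induction_on with
  | empty => simp [sCount]
  | cons b X ih =>
    rw [Multiset.filter_cons, sCount_cons, Multiset.map_cons, Multiset.sum_cons]
    split_ifs with h₁ h₂ h₂ <;> simp only [Multiset.sum_add, Multiset.sum_singleton,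
      Multiset.sum_zero, ih] <;> first | omega | (rw [Nat.mul_add]; omega)

lemma topSum_sCount_succ (X : Multiset ℕ) (v : ℕ) :
    topSum X (sCount X (v + 1)) = (X.filter (v < ·)).sum := by
  rw [topSum_eq_mul_add_sum_tsub le_rfl (sCount_antitone X v.le_succ), sum_filter_lt, mul_comm]

lemma topSum_mono_of_sCount_le {X Y : Multiset ℕ}
    (h : ∀ i, 1 ≤ i → sCount X i ≤ sCount Y i) (m : ℕ) : topSum X m ≤ topSum Y m := by
  rw [topSum_eq_sum_range (N := maxPart X + maxPart Y) (by omega),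
    topSum_eq_sum_range (N := maxPart X + maxPart Y) (by omega)]
  exact sum_le_sum fun i _ => min_le_min_left _ (h _ (by omega))

end TopSum

section Transpose

lemma sCount_transpose (X : Multiset ℕ) (w : ℕ) :
    sCount (transpose X) w = #((range (maxPart X)).filter fun j => w ≤ sCount X (j + 1)) := by
  rw [transpose, sCount, Multiset.filter_map, Multiset.card_map]
  rfl

lemma le_sCount_transpose_iff {X : Multiset ℕ} {i w : ℕ} (hi : 1 ≤ i) (hw : 1 ≤ w) :
    w ≤ sCount (transpose X) i ↔ i ≤ sCount X w := by
  rw [sCount_transpose]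
  constructor
  · intro h
    by_contra! hlt
    have hsub : (range (maxPart X)).filter (fun j => i ≤ sCount X (j + 1)) ⊆ range (w - 1) :=
      fun j hj => by
        rw [mem_filter, mem_range] at hj
        rw [mem_range]
        by_contra! hj'
        exact absurd (hj.2.trans (sCount_antitone X (show w ≤ j + 1 by omega))) (by omega)
    have := card_le_card hsub
    rw [card_range] at this
    omega
  · intro h
    obtain ⟨a, ha, hwa⟩ := sCount_pos_iff.1 (show 0 < sCount X w by omega)
    have hwM : w ≤ maxPart X := hwa.trans (Multiset.le_sup ha)
    have hsub : range w ⊆ (range (maxPart X)).filter (fun j => i ≤ sCount X (j + 1)) :=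
      fun j hj => by
        rw [mem_range] at hj
        exact mem_filter.2 ⟨mem_range.2 (by omega), h.trans (sCount_antitone X (by omega))⟩
    simpa using card_le_card hsub

lemma sum_map_min_transpose (X : Multiset ℕ) (k : ℕ) :
    ((transpose X).map fun b => min b k).sum = topSum X k := by
  rw [topSum_eq_sum_range le_rfl, transpose, Multiset.map_map]
  exact sum_congr (s₁ := range (maxPart X)) rfl fun _ _ => Nat.min_comm _ _

lemma sCount_transpose_transpose (X : Multiset ℕ) {w : ℕ} (hw : 1 ≤ w) :
    sCount (transpose (transpose X)) w = sCount X w :=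
  eq_of_forall_le_iff fun (i : ℕ) => by
    rcases Nat.eq_zero_or_pos i with rfl | hi
    · simp
    rw [le_sCount_transpose_iff hw hi, le_sCount_transpose_iff hi hw]

lemma topSum_transpose (X : Multiset ℕ) (k : ℕ) :
    topSum (transpose X) k = (X.map fun a => min a k).sum := by
  rw [← sum_map_min_transpose, ← sum_Icc_sCount, ← sum_Icc_sCount]
  exact sum_congr rfl fun w hw => sCount_transpose_transpose X (mem_Icc.1 hw).1

lemma topSum_succ (X : Multiset ℕ) (k : ℕ) :
    topSum X (k + 1) = topSum X k + sCount (transpose X) (k + 1) := by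
  rw [← sum_map_min_transpose, ← sum_map_min_transpose, ← sum_Icc_sCount, ← sum_Icc_sCount,
    sum_Icc_succ_top (by omega)]

lemma transpose_sum (X : Multiset ℕ) : (transpose X).sum = X.sum := by
  rw [← topSum_of_sCount_one_le (sCount_le_card X 1), ← sum_map_min_transpose]
  conv_lhs => rw [← Multiset.map_id (transpose X)]
  refine congrArg _ (Multiset.map_congr rfl fun b hb => (min_eq_left ?_).symm)
  obtain ⟨j, -, rfl⟩ := Multiset.mem_map.1 hb
  exact sCount_le_card X _

lemma transpose_pos (X : Multiset ℕ) : ∀ b ∈ transpose X, 0 < b := by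
  intro b hb
  obtain ⟨j, hj, rfl⟩ := Multiset.mem_map.1 hb
  obtain ⟨a, ha, hja⟩ := exists_lt_mem_of_lt_maxPart (Multiset.mem_range.1 hj)
  exact sCount_pos_iff.2 ⟨a, ha, hja⟩

lemma transpose_transpose {X : Multiset ℕ} (hX : ∀ a ∈ X, 0 < a) :
    transpose (transpose X) = X := by
  ext a
  rcases Nat.eq_zero_or_pos a with rfl | ha
  · rw [Multiset.count_eq_zero.2 fun h => (transpose_pos _ 0 h).false,
      Multiset.count_eq_zero.2 fun h => (hX 0 h).false]
  · have h₁ := count_add_sCount_succ (transpose (transpose X)) a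
    have h₂ := count_add_sCount_succ X a
    rw [sCount_transpose_transpose X ha, sCount_transpose_transpose X (by omega)] at h₁
    omega

lemma isSymplectic_transpose {X : Multiset ℕ} (h : ∀ M, Even M → Even (topSum X M)) :
    IsSymplectic (transpose X) := by
  intro a ha
  obtain ⟨b, rfl⟩ : ∃ b, a = 2 * b + 1 := ⟨a / 2, by omega⟩
  -- The multiplicity of `2b+1` in `Xᵗ` is the second difference of `topSum X` at `2b+1`.
  have hcount := count_add_sCount_succ (transpose X) (2 * b + 1)
  have h₁ := topSum_succ X (2 * b)
  have h₂ := topSum_succ X (2 * b + 1)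
  obtain ⟨r, hr⟩ := h (2 * b) (even_two_mul b)
  obtain ⟨s, hs⟩ := h (2 * b + 1 + 1) ⟨b + 1, by ring⟩
  exact ⟨topSum X (2 * b + 1) - r - s, by omega⟩

end Transpose

section Parity

lemma even_card_of_forall_even_count {X : Multiset ℕ} (h : ∀ a ∈ X, Even (X.count a)) :
    Even (Multiset.card X) := by
  rw [← Multiset.toFinset_sum_count_eq]
  exact Finset.even_sum _ fun a ha => h a (Multiset.mem_toFinset.1 ha)

lemma sum_map_tsub_mod_two (X : Multiset ℕ) (v : ℕ) :
    (X.map (· - v)).sum % 2 =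
      Multiset.card (X.filter fun a => v < a ∧ a % 2 ≠ v % 2) % 2 := by
  induction X using Multiset.induction_on with
  | empty => simp
  | cons b X ih =>
    rw [Multiset.map_cons, Multiset.sum_cons, Multiset.filter_cons]
    split_ifs with h <;> simp only [Multiset.card_add, Multiset.card_singleton,
      Multiset.card_zero] <;> omega

lemma even_sum_map_tsub {X : Multiset ℕ} {v : ℕ}
    (h : ∀ a, v < a → a % 2 ≠ v % 2 → Even (X.count a)) : Even (X.map (· - v)).sum := by
  rw [Nat.even_iff, sum_map_tsub_mod_two, ← Nat.even_iff]
  refine even_card_of_forall_even_count fun a ha => ?_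
  obtain ⟨-, hva, hpar⟩ := Multiset.mem_filter.1 ha
  rw [Multiset.count_filter_of_pos ⟨hva, hpar⟩]
  exact h a hva hpar

lemma IsSymplectic.filter {X : Multiset ℕ} (h : IsSymplectic X) (P : ℕ → Prop)
    [DecidablePred P] : IsSymplectic (X.filter P) := fun a ha => by
  rw [Multiset.count_filter]
  split_ifs
  exacts [h a ha, Even.zero]

lemma IsSymplectic.even_sum {X : Multiset ℕ} (h : IsSymplectic X) : Even X.sum := by
  simpa using even_sum_map_tsub (X := X) (v := 0) fun a _ ha => h a (by omega)

lemma IsSymplectic.even_topSum_sCount_succ {X : Multiset ℕ} (h : IsSymplectic X) (v : ℕ) :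
    Even (topSum X (sCount X (v + 1))) := by
  rw [topSum_sCount_succ]
  exact (h.filter _).even_sum

lemma IsSymplectic.even_topSum {X : Multiset ℕ} (h : IsSymplectic X) {m v : ℕ} (hv : Even v)
    (h₁ : sCount X (v + 1) ≤ m) (h₂ : m ≤ sCount X v) : Even (topSum X m) := by
  rw [topSum_eq_mul_add_sum_tsub h₁ h₂]
  refine (hv.mul_left m).add (even_sum_map_tsub fun a _ ha => h a ?_)
  rw [Nat.even_iff] at hv
  omega

lemma IsOrthogonal.topSum_mod_two {X : Multiset ℕ} (h : IsOrthogonal X) {m v : ℕ}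
    (hv : v % 2 = 1) (h₁ : sCount X (v + 1) ≤ m) (h₂ : m ≤ sCount X v) :
    topSum X m % 2 = m % 2 := by
  rw [topSum_eq_mul_add_sum_tsub h₁ h₂]
  obtain ⟨r, hr⟩ := even_sum_map_tsub (X := X) (v := v) fun a _ ha => h a (by omega)
  rw [hr, Nat.add_mod, Nat.mul_mod, hv]
  omega

end Parity

section PMinus

lemma minPart_mem {p : Multiset ℕ} (h : p ≠ 0) : minPart p ∈ p :=
  Nat.sInf_mem (Multiset.exists_mem_of_ne_zero h)

lemma minPart_le {p : Multiset ℕ} {a : ℕ} (h : a ∈ p) : minPart p ≤ a :=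
  Nat.sInf_le h

lemma sCount_minPart (p : Multiset ℕ) : sCount p (minPart p) = Multiset.card p := by
  rw [sCount, Multiset.filter_eq_self.2 fun _ ha => minPart_le ha]

lemma sCount_pMinus (p : Multiset ℕ) {i : ℕ} (hi : 1 ≤ i) :
    sCount p i = sCount (pMinus p) i + if i = minPart p then 1 else 0 := by
  rcases eq_or_ne p 0 with rfl | hne
  · simp [pMinus, minPart, sCount, Nat.pos_iff_ne_zero.1 hi]
  have hp : sCount p i = (if i ≤ minPart p then 1 else 0) + sCount (p.erase (minPart p)) i := by
    conv_lhs => rw [← Multiset.cons_erase (minPart_mem hne)]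
    exact sCount_cons _ _ _
  unfold pMinus
  rw [hp]
  split_ifs <;> (try rw [sCount_cons]) <;> (try split_ifs) <;> omega

lemma pMinus_sum {p : Multiset ℕ} (hp : ∀ a ∈ p, 0 < a) (hne : p ≠ 0) :
    (pMinus p).sum + 1 = p.sum := by
  have hμ := hp _ (minPart_mem hne)
  have hsum := congrArg Multiset.sum (Multiset.cons_erase (minPart_mem hne))
  rw [Multiset.sum_cons] at hsum
  unfold pMinus
  split_ifs
  · omega
  · rw [Multiset.sum_cons]
    omega

lemma topSum_pMinus_le (p : Multiset ℕ) (m : ℕ) : topSum (pMinus p) m ≤ topSum p m :=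
  topSum_mono_of_sCount_le (fun i hi => by rw [sCount_pMinus p hi]; omega) m

lemma topSum_pMinus_of_lt_card {p : Multiset ℕ} {m : ℕ} (h : m < Multiset.card p) :
    topSum (pMinus p) m = topSum p m := by
  have hne : p ≠ 0 := by rintro rfl; simp at h
  rw [topSum_eq_sum_range (N := maxPart (pMinus p) + maxPart p) (by omega),
    topSum_eq_sum_range (N := maxPart (pMinus p) + maxPart p) (by omega)]
  refine sum_congr rfl fun i _ => ?_
  have hrel := sCount_pMinus p (i := i + 1) (by omega)
  split_ifs at hrel with hi
  · rw [hi, sCount_minPart] at hrel ⊢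
    omega
  · rw [hrel, add_zero]

lemma IsOrthogonal.topSum_pMinus_mod_two {p : Multiset ℕ} (h : IsOrthogonal p) {m v : ℕ}
    (hv : v % 2 = 1) (h₁ : sCount (pMinus p) (v + 1) < m) (h₂ : m < sCount (pMinus p) v) :
    topSum (pMinus p) m % 2 = m % 2 := by
  have hrel₁ := sCount_pMinus p (i := v + 1) (by omega)
  have hrel := sCount_pMinus p (i := v) (by omega)
  have hcard := sCount_le_card p v
  rw [topSum_pMinus_of_lt_card (by split_ifs at hrel <;> omega)]
  exact h.topSum_mod_two hv (by split_ifs at hrel₁ <;> omega) (by split_ifs at hrel <;> omega)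

end PMinus

section Spread

def spread (v : ℕ) (X : Multiset ℕ) : Multiset ℕ :=
  (v + 1) ::ₘ addPart (v - 1) ((X.erase v).erase v)

variable {v : ℕ} {X : Multiset ℕ}

lemma cons_cons_erase_erase (h : 2 ≤ X.count v) : v ::ₘ v ::ₘ (X.erase v).erase v = X := by
  rw [Multiset.cons_erase (Multiset.count_pos.1 (by rw [Multiset.count_erase_self]; omega)),
    Multiset.cons_erase (Multiset.count_pos.1 (by omega))]

lemma sCount_spread (h : 2 ≤ X.count v) {i : ℕ} (hi : 1 ≤ i) :
    sCount (spread v X) i + (if i = v then 1 else 0) = sCount X i + if i = v + 1 then 1 else 0 := by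
  conv_rhs => rw [← cons_cons_erase_erase h]
  rw [spread, sCount_cons, sCount_addPart _ _ hi, sCount_cons, sCount_cons]
  split_ifs <;> omega

lemma spread_sum (hv : 1 ≤ v) (h : 2 ≤ X.count v) : (spread v X).sum = X.sum := by
  conv_rhs => rw [← cons_cons_erase_erase h]
  unfold spread addPart
  split_ifs <;> simp only [Multiset.sum_cons] <;> omega

lemma spread_pos (hX : ∀ a ∈ X, 0 < a) : ∀ a ∈ spread v X, 0 < a := by
  intro a ha
  unfold spread addPart at ha
  split_ifs at ha with hv <;> simp only [Multiset.mem_cons] at ha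
  · exact ha.elim (by omega) fun ha =>
      hX a (Multiset.mem_of_mem_erase (Multiset.mem_of_mem_erase ha))
  · exact ha.elim (by omega) fun ha => ha.elim (by omega) fun ha =>
      hX a (Multiset.mem_of_mem_erase (Multiset.mem_of_mem_erase ha))

lemma IsSymplectic.spread (h : IsSymplectic X) (hv : v % 2 = 1) : IsSymplectic (spread v X) := by
  intro a ha
  have hcount : ((X.erase v).erase v).count a = X.count a - if a = v then 2 else 0 := by
    split_ifs with hav
    · subst hav
      rw [Multiset.count_erase_self, Multiset.count_erase_self]
      omega
    · rw [Multiset.count_erase_of_ne hav, Multiset.count_erase_of_ne hav, Nat.sub_zero]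
  have hX := Nat.even_iff.1 (h a ha)
  unfold JiangWF.spread addPart
  rw [Nat.even_iff]
  split_ifs <;> simp only [Multiset.count_cons, hcount] <;> split_ifs <;> omega

lemma topSum_spread (hv : 1 ≤ v) (h : 2 ≤ X.count v) (m : ℕ) :
    topSum (spread v X) m =
      topSum X m + if sCount X (v + 1) < m ∧ m < sCount X v then 1 else 0 := by
  have hS : v + 1 ≤ X.sum := by
    have := congrArg Multiset.sum (cons_cons_erase_erase h)
    simp only [Multiset.sum_cons] at this
    omega
  have hsv := sCount_spread h hv
  have hsv₁ := sCount_spread h (i := v + 1) (by omega)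
  have hcount := count_add_sCount_succ X v
  -- The columns of `spread v X` and `X` differ only at `v` and `v + 1`.
  have hpt : ∀ i ∈ Icc 1 X.sum,
      min m (sCount (spread v X) i) + (if i = v then min m (sCount X v) else 0) +
          (if i = v + 1 then min m (sCount X (v + 1)) else 0) =
        min m (sCount X i) + (if i = v then min m (sCount (spread v X) v) else 0) +
          (if i = v + 1 then min m (sCount (spread v X) (v + 1)) else 0) := by
    intro i hi
    have := sCount_spread h (mem_Icc.1 hi).1
    split_ifs at this ⊢ <;> subst_vars <;> omega
  have hvmem : v ∈ Icc 1 X.sum := mem_Icc.2 ⟨hv, by omega⟩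
  have hv₁mem : v + 1 ∈ Icc 1 X.sum := mem_Icc.2 ⟨by omega, hS⟩
  have hsum := sum_congr rfl hpt
  simp only [sum_add_distrib, sum_ite_eq', hvmem, hv₁mem, if_true] at hsum
  rw [if_pos rfl, if_neg (by omega)] at hsv
  rw [if_neg (by omega), if_pos rfl] at hsv₁
  rw [topSum, topSum, spread_sum hv h]
  split_ifs <;> omega

end Spread

section Collapse

lemma exists_sCount_succ_le_lt {X : Multiset ℕ} {m : ℕ} (h : m < sCount X 1) :
    ∃ v, 1 ≤ v ∧ sCount X (v + 1) ≤ m ∧ m < sCount X v := by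
  have hex : ∃ v, sCount X (v + 1) ≤ m :=
    ⟨maxPart X, by rw [sCount_eq_zero_of_maxPart_lt (by omega)]; omega⟩
  have hpos : 1 ≤ Nat.find hex := by
    by_contra h0
    have := Nat.find_spec hex
    rw [show Nat.find hex = 0 by omega, zero_add] at this
    omega
  refine ⟨Nat.find hex, hpos, Nat.find_spec hex, ?_⟩
  have := Nat.find_min hex (show Nat.find hex - 1 < Nat.find hex by omega)
  rwa [Nat.sub_add_cancel hpos, not_le] at this

lemma sCount_succ_lt_and_lt_sCount_of_topSum_eq {c q : Multiset ℕ} (hdom : domLE c q)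
    {m v : ℕ} (hv : 1 ≤ v) (h₁ : sCount c (v + 1) < m) (h₂ : m < sCount c v)
    (heq : topSum c m = topSum q m) : sCount q (v + 1) < m ∧ m < sCount q v := by
  obtain ⟨k, rfl⟩ : ∃ k, m = k + 1 := ⟨m - 1, by omega⟩
  have hc₀ := topSum_eq_mul_add_sum_tsub (X := c) (m := k) (v := v) (by omega) (by omega)
  have hc₁ := topSum_eq_mul_add_sum_tsub (X := c) (m := k + 1) (v := v) (by omega) h₂.le
  have hc₂ :=
    topSum_eq_mul_add_sum_tsub (X := c) (m := k + 1 + 1) (v := v) (by omega) (by omega)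
  have hq₁ := topSum_succ q k
  have hq₂ := topSum_succ q (k + 1)
  -- The increments of `topSum q` at `k + 1` and `k + 2` are the `(k+1)`-st and `(k+2)`-nd
  -- parts of `q`; touching `c`, whose increments there are both `v`, squeezes them around `v`.
  have hlow := hdom k
  have hhigh := hdom (k + 1 + 1)
  have e₁ : (k + 1) * v = k * v + v := by ring
  have e₂ : (k + 1 + 1) * v = k * v + v + v := by ring
  constructor
  · by_contra! hle
    have := (le_sCount_transpose_iff (X := q) (by omega) (by omega)).2 hle
    omega
  · exact (le_sCount_transpose_iff (X := q) (i := k + 1 + 1) (by omega) hv).1 (by omega)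

variable {p c : Multiset ℕ}

lemma IsSpCollapse.topSum_lt_of_odd_run (horth : IsOrthogonal p)
    (hc : IsSpCollapse (pMinus p) c) {m v : ℕ} (hv : v % 2 = 1)
    (hodd : Odd (c.map (· - v)).sum) (h₁ : sCount c (v + 1) < m) (h₂ : m < sCount c v) :
    topSum c m < topSum (pMinus p) m := by
  by_contra! hge
  have heq := le_antisymm (hc.2.2.1 m) hge
  obtain ⟨hq₁, hq₂⟩ :=
    sCount_succ_lt_and_lt_sCount_of_topSum_eq hc.2.2.1 (by omega) h₁ h₂ heq
  have hq := horth.topSum_pMinus_mod_two hv hq₁ hq₂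
  rw [← heq, topSum_eq_mul_add_sum_tsub h₁.le h₂.le, Nat.add_mod, Nat.mul_mod, hv,
    Nat.odd_iff.1 hodd] at hq
  omega

theorem IsSpCollapse.even_topSum (horth : IsOrthogonal p) (hc : IsSpCollapse (pMinus p) c)
    {M : ℕ} (hM : Even M) : Even (topSum c M) := by
  by_contra hodd
  rcases le_or_gt (sCount c 1) M with hle | hlt
  · exact hodd (topSum_of_sCount_one_le hle ▸ hc.2.1.even_sum)
  obtain ⟨v, hv, hM₁, hM₂⟩ := exists_sCount_succ_le_lt hlt
  have hvodd : v % 2 = 1 := by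
    by_contra hv'
    exact hodd (hc.2.1.even_topSum (Nat.even_iff.2 (by omega)) hM₁ hM₂.le)
  have hM₁' : sCount c (v + 1) < M :=
    hM₁.lt_of_ne fun h => hodd (h ▸ hc.2.1.even_topSum_sCount_succ v)
  have hR : Odd (c.map (· - v)).sum := by
    rw [topSum_eq_mul_add_sum_tsub hM₁ hM₂.le] at hodd
    exact Nat.not_even_iff_odd.1 fun hR => hodd ((hM.mul_right v).add hR)
  have hcount : 2 ≤ c.count v := by
    have := count_add_sCount_succ c v
    omega
  have hdom : domLE (spread v c) (pMinus p) := fun m => by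
    rw [topSum_spread hv hcount]
    split_ifs with hm
    · exact hc.topSum_lt_of_odd_run horth hvodd hR hm.1 hm.2
    · exact hc.2.2.1 m
  have hle := hc.2.2.2 (spread v c) ⟨spread_pos hc.1.1, (spread_sum hv hcount).trans hc.1.2⟩
    (hc.2.1.spread hvodd) hdom M
  rw [topSum_spread hv hcount, if_pos ⟨hM₁', hM₂⟩] at hle
  omega

end Collapse

section PartP

lemma sum_range_two_mul {M : Type*} [AddCommMonoid M] (f : ℕ → M) (N : ℕ) :
    ∑ i ∈ range (2 * N), f i = ∑ j ∈ range N, (f (2 * j) + f (2 * j + 1)) := by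
  induction N with
  | zero => simp
  | succ N ih =>
    rw [show 2 * (N + 1) = 2 * N + 1 + 1 by ring, sum_range_succ, sum_range_succ, ih,
      sum_range_succ, add_assoc]

lemma sum_range_odd_le_add_sum_range_even {f : ℕ → ℕ} (hf : Antitone f) (N : ℕ) :
    ∑ j ∈ range N, f (2 * j + 1) ≤ f 0 + ∑ j ∈ range N, f (2 * j + 2) :=
  calc ∑ j ∈ range N, f (2 * j + 1)
      ≤ ∑ j ∈ range N, f (2 * j) + f (2 * N) :=
        le_add_right (sum_le_sum fun _ _ => hf (by omega))
    _ = f 0 + ∑ j ∈ range N, f (2 * j + 2) := by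
      rw [← sum_range_succ (fun j => f (2 * j)), sum_range_succ', add_comm]
      rfl

lemma sCount_halves (X : Multiset ℕ) {j : ℕ} (hj : 1 ≤ j) :
    sCount ((X.map (· / 2)).filter (0 < ·)) j = sCount X (2 * j) := by
  rw [sCount, Multiset.filter_filter, Multiset.filter_map, Multiset.card_map, sCount]
  congr 1
  exact Multiset.filter_congr fun a _ => by simp only [Function.comp]; omega

lemma two_mul_sum_map_div_two_add_oddMult (X : Multiset ℕ) :
    2 * (X.map (· / 2)).sum + oddMult X = X.sum := by
  induction X using Multiset.induction_on with
  | empty => simp [oddMult]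
  | cons b X ih =>
    simp only [oddMult, Multiset.map_cons, Multiset.sum_cons, Multiset.filter_cons] at ih ⊢
    split_ifs <;> simp only [Multiset.card_add, Multiset.card_singleton,
      Multiset.card_zero] <;> omega

lemma sum_map_succ_div_two (X : Multiset ℕ) :
    (X.map fun a => (a + 1) / 2).sum = (X.map (· / 2)).sum + oddMult X := by
  induction X using Multiset.induction_on with
  | empty => simp [oddMult]
  | cons b X ih =>
    simp only [oddMult, Multiset.map_cons, Multiset.sum_cons, Multiset.filter_cons] at ih ⊢
    split_ifs <;> simp only [Multiset.card_add, Multiset.card_singleton,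
      Multiset.card_zero] <;> omega

lemma sum_filter_pos (X : Multiset ℕ) : (X.filter (0 < ·)).sum = X.sum := by
  induction X using Multiset.induction_on with
  | empty => simp
  | cons b X ih =>
    rw [Multiset.filter_cons, Multiset.sum_cons]
    split_ifs <;> simp only [Multiset.sum_add, Multiset.sum_singleton, Multiset.sum_zero] <;>
      omega

lemma topSum_transpose_pOne {X : Multiset ℕ} {N : ℕ} (h : maxPart X ≤ 2 * N) (k : ℕ) :
    topSum (transpose (pOne X)) k = ∑ j ∈ range N, min k (sCount X (2 * j + 2)) := by
  have hH : maxPart ((X.map (· / 2)).filter (0 < ·)) ≤ N := Multiset.sup_le.2 fun b hb => by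
    obtain ⟨a, ha, rfl⟩ := Multiset.mem_map.1 (Multiset.mem_of_mem_filter hb)
    have : a ≤ 2 * N := (Multiset.le_sup ha).trans h
    omega
  rw [topSum_transpose, pOne, sum_map_min_transpose, topSum_eq_sum_range hH]
  exact sum_congr rfl fun j _ => by rw [sCount_halves X (by omega), mul_add, mul_one]

lemma topSum_le_two_mul_topSum_transpose_pOne_add (X : Multiset ℕ) (k : ℕ) :
    topSum X k ≤ 2 * topSum (transpose (pOne X)) k + min (oddMult X) k := by
  have hN : maxPart X ≤ 2 * maxPart X := by omega
  have hsplit : topSum X k = ∑ j ∈ range (maxPart X), min k (sCount X (2 * j + 1)) +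
      ∑ j ∈ range (maxPart X), min k (sCount X (2 * j + 2)) := by
    rw [topSum_eq_sum_range hN, sum_range_two_mul, sum_add_distrib]
  have hk := sum_range_odd_le_add_sum_range_even (f := fun i => min k (sCount X i))
    (fun _ _ h => min_le_min_left _ (sCount_antitone X h)) (maxPart X)
  have hO : ∑ j ∈ range (maxPart X), min k (sCount X (2 * j + 1)) +
        ∑ j ∈ range (maxPart X), sCount X (2 * j + 2) ≤
      ∑ j ∈ range (maxPart X), min k (sCount X (2 * j + 2)) +
        ∑ j ∈ range (maxPart X), sCount X (2 * j + 1) := by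
    rw [← sum_add_distrib, ← sum_add_distrib]
    refine sum_le_sum fun j _ => ?_
    have := sCount_antitone X (show 2 * j + 1 ≤ 2 * j + 2 by omega)
    omega
  have hodd := sum_range_sCount_two_mul_add_one hN
  have heven := sum_range_sCount_two_mul_add_two hN
  have hhalves := sum_map_succ_div_two X
  have hk₀ := min_le_left k (sCount X 0)
  rw [hsplit, topSum_transpose_pOne hN]
  omega

lemma pOne_sum (X : Multiset ℕ) : (pOne X).sum = (X.map (· / 2)).sum := by
  rw [pOne, transpose_sum, sum_filter_pos]

/-- The partition `P = [p₁ p₁ (2n*)]` of the statement. -/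
def partP (p : Multiset ℕ) : Multiset ℕ := addPart (oddMult p - 1) (pOne p + pOne p)

lemma partP_sum {X : Multiset ℕ} (hX : Odd X.sum) : (partP X).sum + 1 = X.sum := by
  have h := two_mul_sum_map_div_two_add_oddMult X
  have hO : oddMult X % 2 = 1 := by rw [Nat.odd_iff] at hX; omega
  unfold partP addPart
  split_ifs <;> simp only [Multiset.sum_cons, Multiset.sum_add, pOne_sum] <;> omega

lemma topSum_transpose_partP (X : Multiset ℕ) (k : ℕ) :
    topSum (transpose (partP X)) k =
      min (oddMult X - 1) k + 2 * topSum (transpose (pOne X)) k := by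
  rw [topSum_transpose, topSum_transpose]
  unfold partP addPart
  split_ifs <;> simp only [Multiset.map_cons, Multiset.map_add, Multiset.sum_cons,
    Multiset.sum_add] <;> omega

lemma two_mul_topSum_pMinus_div_two_le {X : Multiset ℕ} (hX : Odd X.sum) (k : ℕ) :
    2 * (topSum (pMinus X) k / 2) ≤ topSum (transpose (partP X)) k := by
  have h := two_mul_sum_map_div_two_add_oddMult X
  have hO : oddMult X % 2 = 1 := by rw [Nat.odd_iff] at hX; omega
  have hqp := topSum_pMinus_le X k
  have hpP := topSum_le_two_mul_topSum_transpose_pOne_add X k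
  rw [topSum_transpose_partP]
  omega

end PartP

section Dominance

lemma sum_map_min_add_sum_map_tsub (X : Multiset ℕ) (k : ℕ) :
    (X.map fun a => min a k).sum + (X.map (· - k)).sum = X.sum := by
  rw [← Multiset.sum_map_add]
  conv_rhs => rw [← Multiset.map_id X]
  exact congrArg _ (Multiset.map_congr rfl fun a _ => by simp only [id]; omega)

lemma domLE_transpose_of_topSum_le {X Y : Multiset ℕ} (hsum : X.sum = Y.sum)
    (h : ∀ m, topSum Y (sCount Y (m + 1)) ≤ topSum (transpose X) (sCount Y (m + 1))) :
    domLE X (transpose Y) := by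
  intro m
  have hX := topSum_le_mul_add_sum_tsub X m (sCount Y (m + 1))
  have hXk := sum_map_min_add_sum_map_tsub X (sCount Y (m + 1))
  have hY := topSum_eq_mul_add_sum_tsub (X := Y) (v := m) le_rfl (sCount_antitone Y m.le_succ)
  have hYm := sum_map_min_add_sum_map_tsub Y m
  have hm := h m
  rw [topSum_transpose] at hm ⊢
  rw [mul_comm] at hY
  omega

lemma partP_sum_eq_pMinus_sum {p : Multiset ℕ} (hp : ∀ a ∈ p, 0 < a) (hodd : Odd p.sum) :
    (partP p).sum = (pMinus p).sum := by
  have hne : p ≠ 0 := by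
    rintro rfl
    simp at hodd
  have := partP_sum hodd
  have := pMinus_sum hp hne
  omega

theorem IsSpCollapse.domLE_transpose {p c : Multiset ℕ} (hp : ∀ a ∈ p, 0 < a)
    (hodd : Odd p.sum) (hc : IsSpCollapse (pMinus p) c) :
    domLE (partP p) (transpose c) := by
  refine domLE_transpose_of_topSum_le (by rw [hc.1.2, partP_sum_eq_pMinus_sum hp hodd])
    fun m => ?_
  obtain ⟨r, hr⟩ := hc.2.1.even_topSum_sCount_succ m
  have hcq := hc.2.2.1 (sCount c (m + 1))
  have hqP := two_mul_topSum_pMinus_div_two_le hodd (sCount c (m + 1))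
  omega

end Dominance

/-- `p` an orthogonal partition of `2n+1`, `P = [p₁ p₁ (2n*)]` with
`2n* = (Σ_{b_i odd} a_i) − 1`.  Then `P^{Sp_{2n}} ≤ ((p^-)_{Sp_{2n}})^t` in the dominance
order on partitions of `2n`. -/
theorem expansion_le_BV_dual_Sp (n : ℕ) (p : Multiset ℕ)
    (hp : IsPartitionOf p (2 * n + 1)) (horth : IsOrthogonal p) :
    ∀ e c : Multiset ℕ,
      IsSpExpansion (addPart (oddMult p - 1) (pOne p + pOne p)) e →
      IsSpCollapse (pMinus p) c → domLE e (transpose c) := by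
  intro e c he hc
  have hodd : Odd p.sum := by
    rw [hp.2]
    exact odd_two_mul_add_one n
  refine he.2.2.2.2 (transpose c) ⟨transpose_pos c, ?_⟩
    (isSymplectic_transpose fun M hM => hc.even_topSum horth hM) ?_
    (hc.domLE_transpose hp.1 hodd)
  · rw [transpose_sum, hc.1.2]
    exact (partP_sum_eq_pMinus_sum hp.1 hodd).symm
  · rw [transpose_transpose hc.1.1]
    exact hc.2.1

end JiangWF
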